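/- Let U and V be subspaces of ℝⁿ and P_U, P_V the orthogonal projections onto them. Then ‖P_U - P_V‖₂ = max{‖P_V(I - P_U)‖₂, ‖P_U(I - P_V)‖₂}, where ‖·‖₂ is the operator (spectral) norm. -/

import Mathlib

/-!
Write `P, Q` for the orthogonal projections onto subspaces `K, L` and `P⊥ = 1 - P`, `Q⊥ = 1 - Q`.
Then `P - Q = P Q⊥ - P⊥ Q`, and the two terms take values in the orthogonal subspaces `K` and
`Kᗮ`, so `‖(P - Q) x‖² = ‖P Q⊥ x‖² + ‖P⊥ Q x‖²`. This bounds `‖P - Q‖` below by both norms.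
Conversely `P Q⊥ x = P Q⊥ (Q⊥ x)` and `P⊥ Q x = P⊥ Q (Q x)`, so the Pythagorean splitting
`‖x‖² = ‖Q⊥ x‖² + ‖Q x‖²` bounds it above by their maximum. Finally `‖P⊥ Q‖ = ‖Q P⊥‖`, as the two
operators are adjoint to each other.
-/

noncomputable section

/-- The orthogonal projection onto a subspace of `ℝⁿ`, as a continuous linear map on `ℝⁿ`. -/
def proj {n : ℕ} (V : Submodule ℝ (EuclideanSpace ℝ (Fin n))) :
    EuclideanSpace ℝ (Fin n) →L[ℝ] EuclideanSpace ℝ (Fin n) :=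
  V.subtypeL.comp (V.orthogonalProjection)

theorem IsSelfAdjoint.norm_mul_comm {A : Type*} [NonUnitalNormedRing A] [StarRing A]
    [NormedStarGroup A] {a b : A} (ha : IsSelfAdjoint a) (hb : IsSelfAdjoint b) :
    ‖a * b‖ = ‖b * a‖ := by
  rw [← norm_star, star_mul, ha.star_eq, hb.star_eq]

namespace ContinuousLinearMap

variable {𝕜 E F : Type*} [NontriviallyNormedField 𝕜] [SeminormedAddCommGroup E]
  [SeminormedAddCommGroup F] [NormedSpace 𝕜 E] [NormedSpace 𝕜 F]

theorem max_opNorm_le_opNorm_of_norm_sq_apply_eq_add {f g h : E →L[𝕜] F}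
    (hfg : ∀ x, ‖h x‖ ^ 2 = ‖f x‖ ^ 2 + ‖g x‖ ^ 2) : max ‖f‖ ‖g‖ ≤ ‖h‖ := by
  have hle {k : E →L[𝕜] F} (hk : ∀ x, ‖k x‖ ^ 2 ≤ ‖h x‖ ^ 2) : ‖k‖ ≤ ‖h‖ :=
    k.opNorm_le_bound (norm_nonneg h) fun x =>
      ((pow_le_pow_iff_left₀ (norm_nonneg _) (norm_nonneg _) two_ne_zero).mp (hk x)).trans
        (h.le_opNorm x)
  exact max_le (hle fun x => (hfg x).symm ▸ le_add_of_nonneg_right (sq_nonneg _))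
    (hle fun x => (hfg x).symm ▸ le_add_of_nonneg_left (sq_nonneg _))

end ContinuousLinearMap

namespace Submodule

open ContinuousLinearMap

variable {𝕜 E : Type*} [RCLike 𝕜] [NormedAddCommGroup E] [InnerProductSpace 𝕜 E]
  (K L : Submodule 𝕜 E) [K.HasOrthogonalProjection] [L.HasOrthogonalProjection]

theorem starProjection_sub_starProjection :
    K.starProjection - L.starProjection =
      K.starProjection ∘L Lᗮ.starProjection - Kᗮ.starProjection ∘L L.starProjection := by
  rw [starProjection_orthogonal', starProjection_orthogonal']
  simp only [← ContinuousLinearMap.mul_def]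
  noncomm_ring

theorem norm_sq_starProjection_sub_starProjection_apply (x : E) :
    ‖(K.starProjection - L.starProjection) x‖ ^ 2 =
      ‖(K.starProjection ∘L Lᗮ.starProjection) x‖ ^ 2 +
        ‖(Kᗮ.starProjection ∘L L.starProjection) x‖ ^ 2 := by
  have hK : (K.starProjection ∘L Lᗮ.starProjection) x ∈ K := K.starProjection_apply_mem _
  have hKc : (Kᗮ.starProjection ∘L L.starProjection) x ∈ Kᗮ := Kᗮ.starProjection_apply_mem _
  rw [starProjection_sub_starProjection, sub_apply, @norm_sub_sq 𝕜,
    inner_right_of_mem_orthogonal hK hKc]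
  simp

theorem norm_starProjection_sub_starProjection_le :
    ‖K.starProjection - L.starProjection‖ ≤
      max ‖K.starProjection ∘L Lᗮ.starProjection‖ ‖Kᗮ.starProjection ∘L L.starProjection‖ := by
  set M := max ‖K.starProjection ∘L Lᗮ.starProjection‖ ‖Kᗮ.starProjection ∘L L.starProjection‖
  have hM : 0 ≤ M := (norm_nonneg _).trans (le_max_left _ _)
  refine opNorm_le_bound _ hM fun x => ?_
  refine (pow_le_pow_iff_left₀ (norm_nonneg _) (by positivity) two_ne_zero).mp ?_
  calc ‖(K.starProjection - L.starProjection) x‖ ^ 2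
      = ‖(K.starProjection ∘L Lᗮ.starProjection) (Lᗮ.starProjection x)‖ ^ 2 +
          ‖(Kᗮ.starProjection ∘L L.starProjection) (L.starProjection x)‖ ^ 2 := by
        simp only [norm_sq_starProjection_sub_starProjection_apply, ContinuousLinearMap.comp_apply,
          starProjection_eq_self_iff.mpr (L.starProjection_apply_mem x),
          starProjection_eq_self_iff.mpr (Lᗮ.starProjection_apply_mem x)]
    _ ≤ (M * ‖Lᗮ.starProjection x‖) ^ 2 + (M * ‖L.starProjection x‖) ^ 2 := by
        gcongr
        · exact le_of_opNorm_le _ (le_max_left _ _) _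
        · exact le_of_opNorm_le _ (le_max_right _ _) _
    _ = (M * ‖x‖) ^ 2 := by
        rw [mul_pow, mul_pow, mul_pow, norm_sq_eq_add_norm_sq_starProjection x L]
        ring

theorem norm_starProjection_sub_starProjection [CompleteSpace E] :
    ‖K.starProjection - L.starProjection‖ =
      max ‖L.starProjection ∘L Kᗮ.starProjection‖ ‖K.starProjection ∘L Lᗮ.starProjection‖ := by
  rw [← ContinuousLinearMap.mul_def,
    (isSelfAdjoint_starProjection L).norm_mul_comm (isSelfAdjoint_starProjection Kᗮ),
    ContinuousLinearMap.mul_def, max_comm]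
  exact le_antisymm (norm_starProjection_sub_starProjection_le K L)
    (max_opNorm_le_opNorm_of_norm_sq_apply_eq_add
      (norm_sq_starProjection_sub_starProjection_apply K L))

end Submodule

/-- For subspaces `U, V` of `ℝⁿ` with orthogonal projections `P_U, P_V`,
`‖P_U - P_V‖₂ = max{‖P_V(I - P_U)‖₂, ‖P_U(I - P_V)‖₂}` in operator norm. -/
theorem proj_diff_norm {n : ℕ} (U V : Submodule ℝ (EuclideanSpace ℝ (Fin n))) :
    ‖proj U - proj V‖
      = max ‖(proj V).comp (ContinuousLinearMap.id ℝ (EuclideanSpace ℝ (Fin n)) - proj U)‖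
            ‖(proj U).comp (ContinuousLinearMap.id ℝ (EuclideanSpace ℝ (Fin n)) - proj V)‖ := by
  have hproj (W : Submodule ℝ (EuclideanSpace ℝ (Fin n))) : proj W = W.starProjection := rfl
  simp only [hproj, ← Submodule.starProjection_orthogonal]
  exact U.norm_starProjection_sub_starProjection V

end
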